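/- Let G be a finite-dimensional Hopf algebra, (λ, ρ) a commuting pair of coactions on M with two-sided coaction δ = (λ ⊗ id) ∘ ρ, let γ : M → A be an algebra map, and write λ(m) = m₍₋₁₎ ⊗ m₍₀₎, ρ(m) = m₍₀₎ ⊗ m₍₁₎. Then for T ∈ G ⊗ A the following are equivalent: (i) T·(γ ⊗ id)(λ(m)) = ((id ⊗ γ)(ρ(m)))^op·T for all m ∈ M (T is a λρ-intertwiner, where ρ^op is ρ followed by the flip); (ii) T·(1_G ⊗ γ(m)) = (m₍₁₎ ⊗ γ(m₍₀₎))·T·(S⁻¹(m₍₋₁₎) ⊗ 1_A) for all m; (iii) (1_G ⊗ γ(m))·T = (S⁻¹(m₍₁₎) ⊗ 1_A)·T·(m₍₋₁₎ ⊗ γ(m₍₀₎)) for all m. -/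

import Mathlib

open TensorProduct

section St9Aux
open LinearMap Coalgebra HopfAlgebra

noncomputable section
namespace St9

variable {G : Type*} [Ring G] [HopfAlgebra ℂ G]

def conv (f g : G ⊗[ℂ] G →ₗ[ℂ] G) : G ⊗[ℂ] G →ₗ[ℂ] G :=
  LinearMap.mul' ℂ G ∘ₗ map f g ∘ₗ (tensorTensorTensorComm ℂ G G G G).toLinearMap
    ∘ₗ map comul comul

def cunit : G ⊗[ℂ] G →ₗ[ℂ] G :=
  Algebra.linearMap ℂ G ∘ₗ LinearMap.mul' ℂ ℂ ∘ₗ map counit counit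

lemma conv_tmul (f g : G ⊗[ℂ] G →ₗ[ℂ] G) (a b : G) :
    conv f g (a ⊗ₜ[ℂ] b) =
      LinearMap.mul' ℂ G (map f g
        ((tensorTensorTensorComm ℂ G G G G) ((comul a : G ⊗[ℂ] G) ⊗ₜ[ℂ] (comul b : G ⊗[ℂ] G)))) := by
  simp [conv]

lemma cunit_tmul (a b : G) : cunit (a ⊗ₜ[ℂ] b) = algebraMap ℂ G (counit a * counit b) := by
  simp [cunit, Algebra.linearMap_apply]

def Fm : G ⊗[ℂ] G →ₗ[ℂ] G := antipode ℂ ∘ₗ LinearMap.mul' ℂ G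
def Mm : G ⊗[ℂ] G →ₗ[ℂ] G := LinearMap.mul' ℂ G
def Nm : G ⊗[ℂ] G →ₗ[ℂ] G :=
  LinearMap.mul' ℂ G ∘ₗ map (antipode ℂ) (antipode ℂ) ∘ₗ (TensorProduct.comm ℂ G G).toLinearMap

lemma convFM : conv (Fm (G := G)) Mm = cunit := by
  have key : (LinearMap.mul' ℂ G ∘ₗ map (Fm (G := G)) Mm
        ∘ₗ (tensorTensorTensorComm ℂ G G G G).toLinearMap)
      = LinearMap.mul' ℂ G ∘ₗ LinearMap.rTensor G (antipode ℂ) ∘ₗ LinearMap.mul' ℂ (G ⊗[ℂ] G) := by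
    ext a b c d
    simp [Fm, Mm, Algebra.TensorProduct.tmul_mul_tmul]
  refine TensorProduct.ext' fun a b => ?_
  have h1 : conv (Fm (G := G)) Mm (a ⊗ₜ b)
      = (LinearMap.mul' ℂ G ∘ₗ map (Fm (G := G)) Mm
        ∘ₗ (tensorTensorTensorComm ℂ G G G G).toLinearMap) ((comul a : G ⊗[ℂ] G) ⊗ₜ comul b) := by
    simp [conv]
  rw [h1, key]
  have h2 : (LinearMap.mul' ℂ (G ⊗[ℂ] G)) ((comul a : G ⊗[ℂ] G) ⊗ₜ comul b)
      = comul (R := ℂ) (a * b) := by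
    simp [Bialgebra.comul_mul]
  simp only [LinearMap.comp_apply, h2, mul_antipode_rTensor_comul_apply]
  simp [cunit_tmul]

lemma convMN : conv (Mm (G := G)) Nm = cunit := by
  set U : (G ⊗[ℂ] G) ⊗[ℂ] (G ⊗[ℂ] G) →ₗ[ℂ] G :=
    LinearMap.mul' ℂ G ∘ₗ map (Mm (G := G)) Nm
      ∘ₗ (tensorTensorTensorComm ℂ G G G G).toLinearMap with hU
  have inner : ∀ x y : G, U ∘ₗ TensorProduct.mk ℂ (G ⊗[ℂ] G) (G ⊗[ℂ] G) (x ⊗ₜ y)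
      = LinearMap.mulRight ℂ (antipode (R := ℂ) y) ∘ₗ LinearMap.mulLeft ℂ x
        ∘ₗ LinearMap.mul' ℂ G ∘ₗ lTensor G (antipode ℂ) := by
    intro x y
    refine TensorProduct.ext' fun z w => ?_
    simp [hU, Mm, Nm, mul_assoc]
  have stage : ∀ b : G, U ∘ₗ (TensorProduct.mk ℂ (G ⊗[ℂ] G) (G ⊗[ℂ] G)).flip (comul b)
      = counit (R := ℂ) b • (LinearMap.mul' ℂ G ∘ₗ lTensor G (antipode ℂ)) := by
    intro b
    refine TensorProduct.ext' fun x y => ?_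
    have h := LinearMap.congr_fun (inner x y) (comul b)
    simp only [LinearMap.comp_apply, TensorProduct.mk_apply, LinearMap.flip_apply,
      LinearMap.smul_apply, LinearMap.mulRight_apply, LinearMap.mulLeft_apply] at h ⊢
    rw [mul_antipode_lTensor_comul_apply] at h
    rw [h]
    simp [Algebra.algebraMap_eq_smul_one, mul_smul_comm, smul_mul_assoc]
  refine TensorProduct.ext' fun a b => ?_
  have h1 : conv (Mm (G := G)) Nm (a ⊗ₜ b) = U ((comul a : G ⊗[ℂ] G) ⊗ₜ comul b) := by
    simp [conv, hU]
  have h2 := LinearMap.congr_fun (stage b) (comul a)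
  simp only [LinearMap.comp_apply, TensorProduct.mk_apply, LinearMap.flip_apply,
    LinearMap.smul_apply] at h2
  rw [h1, h2, mul_antipode_lTensor_comul_apply, cunit_tmul]
  rw [Algebra.smul_def, ← map_mul, mul_comm]

lemma conv_unit_right (f : G ⊗[ℂ] G →ₗ[ℂ] G) : conv f cunit = f := by
  have key : (LinearMap.mul' ℂ G ∘ₗ map f cunit
        ∘ₗ (tensorTensorTensorComm ℂ G G G G).toLinearMap)
      = f ∘ₗ map ((TensorProduct.rid ℂ G).toLinearMap ∘ₗ lTensor G counit)
              ((TensorProduct.rid ℂ G).toLinearMap ∘ₗ lTensor G counit) := by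
    ext x y z w
    simp only [AlgebraTensorModule.curry_apply, curry_apply, coe_restrictScalars,
      LinearMap.comp_apply, LinearEquiv.coe_coe, tensorTensorTensorComm_tmul, map_tmul,
      LinearMap.mul'_apply, cunit_tmul, lTensor_tmul, TensorProduct.rid_tmul]
    rw [tmul_smul, ← smul_tmul', map_smul, map_smul, smul_smul, ← Algebra.commutes,
      ← Algebra.smul_def, mul_comm (Coalgebra.counit (R := ℂ) w) (Coalgebra.counit (R := ℂ) y)]
  refine TensorProduct.ext' fun a b => ?_
  have h1 : conv f cunit (a ⊗ₜ b)
      = (LinearMap.mul' ℂ G ∘ₗ map f cunit ∘ₗ (tensorTensorTensorComm ℂ G G G G).toLinearMap)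
        ((comul a : G ⊗[ℂ] G) ⊗ₜ comul b) := by simp [conv]
  rw [h1, key]
  simp [lTensor_counit_comul]

lemma conv_unit_left (f : G ⊗[ℂ] G →ₗ[ℂ] G) : conv cunit f = f := by
  have key : (LinearMap.mul' ℂ G ∘ₗ map cunit f
        ∘ₗ (tensorTensorTensorComm ℂ G G G G).toLinearMap)
      = f ∘ₗ map ((TensorProduct.lid ℂ G).toLinearMap ∘ₗ rTensor G counit)
              ((TensorProduct.lid ℂ G).toLinearMap ∘ₗ rTensor G counit) := by
    ext x y z w
    simp only [AlgebraTensorModule.curry_apply, curry_apply, coe_restrictScalars,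
      LinearMap.comp_apply, LinearEquiv.coe_coe, tensorTensorTensorComm_tmul, map_tmul,
      LinearMap.mul'_apply, cunit_tmul, rTensor_tmul, TensorProduct.lid_tmul]
    rw [tmul_smul, ← smul_tmul', map_smul, map_smul, smul_smul, ← Algebra.smul_def,
      mul_comm (Coalgebra.counit (R := ℂ) z) (Coalgebra.counit (R := ℂ) x)]
  refine TensorProduct.ext' fun a b => ?_
  have h1 : conv cunit f (a ⊗ₜ b)
      = (LinearMap.mul' ℂ G ∘ₗ map cunit f ∘ₗ (tensorTensorTensorComm ℂ G G G G).toLinearMap)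
        ((comul a : G ⊗[ℂ] G) ⊗ₜ comul b) := by simp [conv]
  rw [h1, key]
  simp [rTensor_counit_comul]

def trip (f g h : G ⊗[ℂ] G →ₗ[ℂ] G) :
    ((G ⊗[ℂ] G) ⊗[ℂ] G) ⊗[ℂ] ((G ⊗[ℂ] G) ⊗[ℂ] G) →ₗ[ℂ] G :=
  LinearMap.mul' ℂ G ∘ₗ map (LinearMap.mul' ℂ G ∘ₗ map f g) h
    ∘ₗ rTensor (G ⊗[ℂ] G) (tensorTensorTensorComm ℂ G G G G).toLinearMap
    ∘ₗ (tensorTensorTensorComm ℂ (G ⊗[ℂ] G) G (G ⊗[ℂ] G) G).toLinearMap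

def trip' (f g h : G ⊗[ℂ] G →ₗ[ℂ] G) :
    (G ⊗[ℂ] (G ⊗[ℂ] G)) ⊗[ℂ] (G ⊗[ℂ] (G ⊗[ℂ] G)) →ₗ[ℂ] G :=
  LinearMap.mul' ℂ G ∘ₗ map f (LinearMap.mul' ℂ G ∘ₗ map g h)
    ∘ₗ lTensor (G ⊗[ℂ] G) (tensorTensorTensorComm ℂ G G G G).toLinearMap
    ∘ₗ (tensorTensorTensorComm ℂ G (G ⊗[ℂ] G) G (G ⊗[ℂ] G)).toLinearMap

lemma A1 (f g h : G ⊗[ℂ] G →ₗ[ℂ] G) :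
    (LinearMap.mul' ℂ G ∘ₗ map (conv f g) h
      ∘ₗ (tensorTensorTensorComm ℂ G G G G).toLinearMap)
    = trip f g h ∘ₗ map (comul.rTensor G) (comul.rTensor G) := by
  ext a b c d
  simp [trip, conv]

lemma A2 (f g h : G ⊗[ℂ] G →ₗ[ℂ] G) :
    (LinearMap.mul' ℂ G ∘ₗ map f (conv g h)
      ∘ₗ (tensorTensorTensorComm ℂ G G G G).toLinearMap)
    = trip' f g h ∘ₗ map (comul.lTensor G) (comul.lTensor G) := by
  ext a b c d
  simp [trip', conv]

lemma A3 (f g h : G ⊗[ℂ] G →ₗ[ℂ] G) :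
    trip' f g h ∘ₗ map (TensorProduct.assoc ℂ G G G).toLinearMap
        (TensorProduct.assoc ℂ G G G).toLinearMap
    = trip f g h := by
  ext a b c d e k
  simp [trip, trip', mul_assoc]

lemma conv_assoc (f g h : G ⊗[ℂ] G →ₗ[ℂ] G) :
    conv (conv f g) h = conv f (conv g h) := by
  refine TensorProduct.ext' fun a b => ?_
  have hL : conv (conv f g) h (a ⊗ₜ b)
      = (trip f g h) ((comul.rTensor G (comul a)) ⊗ₜ (comul.rTensor G (comul b))) := by
    have := LinearMap.congr_fun (A1 f g h) ((comul a : G ⊗[ℂ] G) ⊗ₜ comul b)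
    simp only [LinearMap.comp_apply, map_tmul] at this
    rw [conv_tmul]
    exact this
  have hR : conv f (conv g h) (a ⊗ₜ b)
      = (trip' f g h) ((comul.lTensor G (comul a)) ⊗ₜ (comul.lTensor G (comul b))) := by
    have := LinearMap.congr_fun (A2 f g h) ((comul a : G ⊗[ℂ] G) ⊗ₜ comul b)
    simp only [LinearMap.comp_apply, map_tmul] at this
    rw [conv_tmul]
    exact this
  rw [hL, hR, ← Coalgebra.coassoc_apply a, ← Coalgebra.coassoc_apply b]
  have := LinearMap.congr_fun (A3 f g h)
    ((comul.rTensor G (comul a)) ⊗ₜ (comul.rTensor G (comul b)))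
  simp only [LinearMap.comp_apply, map_tmul, LinearEquiv.coe_coe] at this
  rw [this]

theorem Fm_eq_Nm : Fm (G := G) = Nm := by
  calc Fm (G := G) = conv (Fm (G := G)) cunit := (conv_unit_right _).symm
    _ = conv (Fm (G := G)) (conv Mm Nm) := by rw [convMN]
    _ = conv (conv (Fm (G := G)) Mm) Nm := (conv_assoc _ _ _).symm
    _ = conv cunit Nm := by rw [convFM]
    _ = Nm := conv_unit_left _

theorem antipode_mul_rev (a b : G) :
    antipode (R := ℂ) (a * b) = antipode (R := ℂ) b * antipode (R := ℂ) a := by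
  have := LinearMap.congr_fun (Fm_eq_Nm (G := G)) (a ⊗ₜ b)
  simpa [Fm, Nm, Mm] using this

theorem antipode_one' : antipode (R := ℂ) (1 : G) = 1 := by
  have := mul_antipode_rTensor_comul_apply (R := ℂ) (1 : G)
  simpa [Algebra.TensorProduct.one_def] using this

theorem antipode_algebraMap (c : ℂ) :
    antipode (R := ℂ) (algebraMap ℂ G c) = algebraMap ℂ G c := by
  rw [Algebra.algebraMap_eq_smul_one, map_smul, antipode_one']

section SiLemmas
variable (Si : G →ₗ[ℂ] G)
  (hSi1 : ∀ x : G, Si (antipode (R := ℂ) x) = x)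
  (hSi2 : ∀ x : G, antipode (R := ℂ) (Si x) = x)

include hSi1 hSi2

theorem L1 (g : G) :
    LinearMap.mul' ℂ G (map LinearMap.id Si ((TensorProduct.comm ℂ G G) (comul (R := ℂ) g)))
      = algebraMap ℂ G (counit g) := by
  have hinj : Function.Injective (antipode (R := ℂ) (A := G)) := fun x y h => by
    rw [← hSi1 x, h, hSi1]
  apply hinj
  have key : antipode (R := ℂ) ∘ₗ (LinearMap.mul' ℂ G ∘ₗ map LinearMap.id Si
        ∘ₗ (TensorProduct.comm ℂ G G).toLinearMap)
      = LinearMap.mul' ℂ G ∘ₗ lTensor G (antipode ℂ) := by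
    refine TensorProduct.ext' fun x y => ?_
    simp [antipode_mul_rev, hSi2]
  have h := LinearMap.congr_fun key (comul (R := ℂ) g)
  simp only [LinearMap.comp_apply, LinearEquiv.coe_coe] at h
  rw [h, mul_antipode_lTensor_comul_apply, antipode_algebraMap]

theorem L2 (g : G) :
    LinearMap.mul' ℂ G (map Si LinearMap.id ((TensorProduct.comm ℂ G G) (comul (R := ℂ) g)))
      = algebraMap ℂ G (counit g) := by
  have hinj : Function.Injective (antipode (R := ℂ) (A := G)) := fun x y h => by
    rw [← hSi1 x, h, hSi1]
  apply hinj
  have key : antipode (R := ℂ) ∘ₗ (LinearMap.mul' ℂ G ∘ₗ map Si LinearMap.id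
        ∘ₗ (TensorProduct.comm ℂ G G).toLinearMap)
      = LinearMap.mul' ℂ G ∘ₗ rTensor G (antipode ℂ) := by
    refine TensorProduct.ext' fun x y => ?_
    simp [antipode_mul_rev, hSi2]
  have h := LinearMap.congr_fun key (comul (R := ℂ) g)
  simp only [LinearMap.comp_apply, LinearEquiv.coe_coe] at h
  rw [h, mul_antipode_rTensor_comul_apply, antipode_algebraMap]

end SiLemmas

section Main
variable {M A : Type*}
  [Ring M] [Algebra ℂ M] [Ring A] [Algebra ℂ A]
  (Si : G →ₗ[ℂ] G) (lam : M →ₐ[ℂ] G ⊗[ℂ] M) (rho : M →ₐ[ℂ] M ⊗[ℂ] G)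
  (γ : M →ₐ[ℂ] A) (T : G ⊗[ℂ] A)

-- counit collapse lemmas
lemma lid_collapse {W : Type*} [AddCommGroup W] [Module ℂ W] (R' : M →ₗ[ℂ] W)
    (hlam_counit : ∀ m : M,
      (TensorProduct.lid ℂ M) (map (counit (R := ℂ)) LinearMap.id (lam m)) = m)
    (m : M) :
    (TensorProduct.lid ℂ W) (map (counit (R := ℂ)) R' (lam m)) = R' m := by
  have h1 : (map (counit (R := ℂ) (A := G)) R' : G ⊗[ℂ] M →ₗ[ℂ] ℂ ⊗[ℂ] W)
      = lTensor ℂ R' ∘ₗ map counit LinearMap.id := by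
    refine TensorProduct.ext' fun g x => ?_
    simp
  have h2 : (TensorProduct.lid ℂ W).toLinearMap ∘ₗ lTensor ℂ R'
      = R' ∘ₗ (TensorProduct.lid ℂ M).toLinearMap := by
    refine TensorProduct.ext' fun c x => ?_
    simp [TensorProduct.lid_tmul, smul_tmul']
  rw [h1]
  have := LinearMap.congr_fun h2 (map (counit (R := ℂ)) LinearMap.id (lam m))
  simp only [LinearMap.comp_apply, LinearEquiv.coe_coe] at this
  simp only [LinearMap.comp_apply]
  rw [this, hlam_counit m]

lemma rid_collapse {W : Type*} [AddCommGroup W] [Module ℂ W] (R' : M →ₗ[ℂ] W)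
    (hrho_counit : ∀ m : M,
      (TensorProduct.rid ℂ M) (map LinearMap.id (counit (R := ℂ)) (rho m)) = m)
    (m : M) :
    (TensorProduct.rid ℂ W) (map R' (counit (R := ℂ)) (rho m)) = R' m := by
  have h1 : (map R' (counit (R := ℂ) (A := G)) : M ⊗[ℂ] G →ₗ[ℂ] W ⊗[ℂ] ℂ)
      = rTensor ℂ R' ∘ₗ map LinearMap.id counit := by
    refine TensorProduct.ext' fun x g => ?_
    simp
  have h2 : (TensorProduct.rid ℂ W).toLinearMap ∘ₗ rTensor ℂ R'
      = R' ∘ₗ (TensorProduct.rid ℂ M).toLinearMap := by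
    refine TensorProduct.ext' fun x c => ?_
    simp [TensorProduct.rid_tmul]
  rw [h1]
  have := LinearMap.congr_fun h2 (map LinearMap.id (counit (R := ℂ)) (rho m))
  simp only [LinearMap.comp_apply, LinearEquiv.coe_coe] at this
  simp only [LinearMap.comp_apply]
  rw [this, hrho_counit m]


def chi : G ⊗[ℂ] (M ⊗[ℂ] G) →ₗ[ℂ] G ⊗[ℂ] A :=
  TensorProduct.lift (LinearMap.mul ℂ (G ⊗[ℂ] A) ∘ₗ LinearMap.mulRight ℂ T) ∘ₗ
    map ((TensorProduct.comm ℂ A G).toLinearMap ∘ₗ map γ.toLinearMap LinearMap.id)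
      ((TensorProduct.mk ℂ G A).flip (1 : A) ∘ₗ Si) ∘ₗ
    (TensorProduct.comm ℂ G (M ⊗[ℂ] G)).toLinearMap

lemma chi_tmul (g : G) (w : M ⊗[ℂ] G) :
    chi Si γ T (g ⊗ₜ w) =
      (TensorProduct.comm ℂ A G) (map γ.toLinearMap LinearMap.id w) * T * (Si g ⊗ₜ (1 : A)) := by
  simp [chi]

def chi3 : G ⊗[ℂ] (G ⊗[ℂ] M) →ₗ[ℂ] G ⊗[ℂ] A :=
  TensorProduct.lift (LinearMap.mul ℂ (G ⊗[ℂ] A) ∘ₗ LinearMap.mulRight ℂ T) ∘ₗ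
    map ((TensorProduct.mk ℂ G A).flip (1 : A) ∘ₗ Si) (map LinearMap.id γ.toLinearMap)

lemma chi3_tmul (h : G) (w : G ⊗[ℂ] M) :
    chi3 Si γ T (h ⊗ₜ w) = (Si h ⊗ₜ (1 : A)) * T * map LinearMap.id γ.toLinearMap w := by
  simp [chi3]

def A3c : G ⊗[ℂ] (M ⊗[ℂ] G) →ₗ[ℂ] G ⊗[ℂ] (G ⊗[ℂ] M) :=
  (TensorProduct.assoc ℂ G G M).toLinearMap ∘ₗ
    map (TensorProduct.comm ℂ G G).toLinearMap LinearMap.id ∘ₗ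
    (TensorProduct.assoc ℂ G G M).symm.toLinearMap ∘ₗ
    map LinearMap.id (TensorProduct.comm ℂ M G).toLinearMap

def B3 : (G ⊗[ℂ] M) ⊗[ℂ] G →ₗ[ℂ] G ⊗[ℂ] (G ⊗[ℂ] M) :=
  A3c ∘ₗ (TensorProduct.assoc ℂ G M G).toLinearMap

def qmap : G ⊗[ℂ] G →ₗ[ℂ] G :=
  LinearMap.mul' ℂ G ∘ₗ map LinearMap.id Si ∘ₗ (TensorProduct.comm ℂ G G).toLinearMap

def qmap' : G ⊗[ℂ] G →ₗ[ℂ] G :=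
  LinearMap.mul' ℂ G ∘ₗ map Si LinearMap.id ∘ₗ (TensorProduct.comm ℂ G G).toLinearMap

def Rone : M →ₗ[ℂ] G ⊗[ℂ] A :=
  LinearMap.mulLeft ℂ T ∘ₗ TensorProduct.mk ℂ G A 1 ∘ₗ γ.toLinearMap

def Rone' : M →ₗ[ℂ] G ⊗[ℂ] A :=
  LinearMap.mulRight ℂ T ∘ₗ TensorProduct.mk ℂ G A 1 ∘ₗ γ.toLinearMap

def Rz : M →ₗ[ℂ] G ⊗[ℂ] A :=
  LinearMap.mulRight ℂ T ∘ₗ (TensorProduct.comm ℂ A G).toLinearMap ∘ₗ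
    map γ.toLinearMap LinearMap.id ∘ₗ rho.toLinearMap

def alp : G ⊗[ℂ] M →ₗ[ℂ] G ⊗[ℂ] A :=
  LinearMap.mul' ℂ (G ⊗[ℂ] A) ∘ₗ
    map (Rone γ T) ((TensorProduct.mk ℂ G A).flip (1 : A)) ∘ₗ
    (TensorProduct.comm ℂ G M).toLinearMap

def bet : G ⊗[ℂ] M →ₗ[ℂ] G ⊗[ℂ] A :=
  LinearMap.mul' ℂ (G ⊗[ℂ] A) ∘ₗ
    map (chi Si γ T ∘ₗ map LinearMap.id rho.toLinearMap ∘ₗ lam.toLinearMap)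
      ((TensorProduct.mk ℂ G A).flip (1 : A)) ∘ₗ
    (TensorProduct.comm ℂ G M).toLinearMap

def Th : G ⊗[ℂ] (G ⊗[ℂ] M) →ₗ[ℂ] G ⊗[ℂ] A :=
  LinearMap.mul' ℂ (G ⊗[ℂ] A) ∘ₗ
    map (chi Si γ T ∘ₗ map LinearMap.id rho.toLinearMap)
      ((TensorProduct.mk ℂ G A).flip (1 : A)) ∘ₗ
    (TensorProduct.comm ℂ G (G ⊗[ℂ] M)).toLinearMap

def Xi : (G ⊗[ℂ] G) ⊗[ℂ] M →ₗ[ℂ] G ⊗[ℂ] A :=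
  LinearMap.mul' ℂ (G ⊗[ℂ] A) ∘ₗ
    map (Rz rho γ T) ((TensorProduct.mk ℂ G A).flip (1 : A) ∘ₗ qmap' Si) ∘ₗ
    (TensorProduct.comm ℂ (G ⊗[ℂ] G) M).toLinearMap

theorem imp21
    (hlam_coassoc : ∀ m : M,
      TensorProduct.map LinearMap.id lam.toLinearMap (lam m) =
        (TensorProduct.assoc ℂ G G M)
          (TensorProduct.map (Coalgebra.comul (R := ℂ)) LinearMap.id (lam m)))
    (hcomm : ∀ m : M,
      (TensorProduct.assoc ℂ G M G)
          (TensorProduct.map lam.toLinearMap LinearMap.id (rho m)) =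
        TensorProduct.map LinearMap.id rho.toLinearMap (lam m))
    (hL2 : ∀ g : G, qmap' Si (comul (R := ℂ) g) = algebraMap ℂ G (counit g))
    (hlid : ∀ (R' : M →ₗ[ℂ] G ⊗[ℂ] A) (m : M),
      (TensorProduct.lid ℂ (G ⊗[ℂ] A)) (map (counit (R := ℂ)) R' (lam m)) = R' m)
    (hii : ∀ m : M,
      T * ((1 : G) ⊗ₜ[ℂ] γ m) =
        chi Si γ T ((TensorProduct.assoc ℂ G M G)
          (TensorProduct.map lam.toLinearMap LinearMap.id (rho m))))
    (m : M) :
    T * TensorProduct.map LinearMap.id γ.toLinearMap (lam m) =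
      (TensorProduct.comm ℂ A G)
          (TensorProduct.map γ.toLinearMap LinearMap.id (rho m)) * T := by
  have s1 : LinearMap.mulLeft ℂ T ∘ₗ map LinearMap.id γ.toLinearMap = alp γ T := by
    refine TensorProduct.ext' fun g m' => ?_
    simp only [LinearMap.comp_apply, map_tmul, LinearMap.id_coe, id_eq,
      LinearMap.mulLeft_apply, alp, Rone, LinearEquiv.coe_coe, TensorProduct.comm_tmul,
      TensorProduct.mk_apply, LinearMap.flip_apply, LinearMap.mul'_apply,
      AlgHom.toLinearMap_apply]
    rw [mul_assoc, Algebra.TensorProduct.tmul_mul_tmul, one_mul, mul_one]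
  have s2 : alp γ T = bet Si lam rho γ T := by
    refine TensorProduct.ext' fun g m' => ?_
    simp only [alp, bet, LinearMap.comp_apply, LinearEquiv.coe_coe, TensorProduct.comm_tmul,
      map_tmul, LinearMap.mul'_apply, Rone, TensorProduct.mk_apply, LinearMap.flip_apply,
      LinearMap.mulLeft_apply, AlgHom.toLinearMap_apply]
    rw [← hcomm m', ← hii m']
  have s3 : bet Si lam rho γ T = Th Si rho γ T ∘ₗ map LinearMap.id lam.toLinearMap := by
    refine TensorProduct.ext' fun g m' => ?_
    simp [bet, Th]
  have s4 : Th Si rho γ T ∘ₗ (TensorProduct.assoc ℂ G G M).toLinearMap = Xi Si rho γ T := by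
    ext g1 g2 m'
    simp only [AlgebraTensorModule.curry_apply, curry_apply, coe_restrictScalars,
      LinearMap.comp_apply, LinearEquiv.coe_coe, TensorProduct.assoc_tmul, Th, Xi,
      TensorProduct.comm_tmul, map_tmul, LinearMap.mul'_apply, LinearMap.id_coe, id_eq,
      AlgHom.toLinearMap_apply, chi_tmul, TensorProduct.mk_apply, LinearMap.flip_apply,
      qmap', LinearMap.mulRight_apply, Rz]
    rw [mul_assoc, mul_assoc, mul_assoc, Algebra.TensorProduct.tmul_mul_tmul, one_mul]
  have s5 : Xi Si rho γ T ∘ₗ map (comul (R := ℂ)) LinearMap.id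
      = (TensorProduct.lid ℂ (G ⊗[ℂ] A)).toLinearMap
          ∘ₗ map (counit (R := ℂ)) (Rz rho γ T) := by
    refine TensorProduct.ext' fun g m' => ?_
    simp only [LinearMap.comp_apply, map_tmul, LinearMap.id_coe, id_eq, Xi,
      LinearEquiv.coe_coe, TensorProduct.comm_tmul, LinearMap.mul'_apply,
      TensorProduct.mk_apply, LinearMap.flip_apply, TensorProduct.lid_tmul]
    rw [hL2 g, Algebra.algebraMap_eq_smul_one, ← smul_tmul', ← Algebra.TensorProduct.one_def,
      mul_smul_comm, mul_one]
  have e1 := LinearMap.congr_fun s1 (lam m)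
  have e2 := LinearMap.congr_fun s2 (lam m)
  have e3 := LinearMap.congr_fun s3 (lam m)
  have e4 := LinearMap.congr_fun s4 (map (comul (R := ℂ)) LinearMap.id (lam m))
  have e5 := LinearMap.congr_fun s5 (lam m)
  simp only [LinearMap.comp_apply, LinearEquiv.coe_coe, LinearMap.mulLeft_apply] at e1 e2 e3 e4 e5
  rw [e1, e2, e3, hlam_coassoc m, e4, e5, hlid]
  simp [Rz]

def F3' : (G ⊗[ℂ] M) ⊗[ℂ] G →ₗ[ℂ] G ⊗[ℂ] A :=
  LinearMap.mul' ℂ (G ⊗[ℂ] A) ∘ₗ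
    map ((TensorProduct.mk ℂ G A).flip (1 : A) ∘ₗ Si)
      (LinearMap.mulLeft ℂ T ∘ₗ map LinearMap.id γ.toLinearMap) ∘ₗ
    (TensorProduct.comm ℂ (G ⊗[ℂ] M) G).toLinearMap

def E3 : M ⊗[ℂ] G →ₗ[ℂ] G ⊗[ℂ] A :=
  LinearMap.mul' ℂ (G ⊗[ℂ] A) ∘ₗ
    map ((TensorProduct.mk ℂ G A).flip (1 : A) ∘ₗ Si) (Rz rho γ T) ∘ₗ
    (TensorProduct.comm ℂ M G).toLinearMap

def H3 : (M ⊗[ℂ] G) ⊗[ℂ] G →ₗ[ℂ] G ⊗[ℂ] A :=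
  LinearMap.mul' ℂ (G ⊗[ℂ] A) ∘ₗ
    map ((TensorProduct.mk ℂ G A).flip (1 : A) ∘ₗ Si)
      (LinearMap.mulRight ℂ T ∘ₗ (TensorProduct.comm ℂ A G).toLinearMap ∘ₗ
        map γ.toLinearMap LinearMap.id) ∘ₗ
    (TensorProduct.comm ℂ (M ⊗[ℂ] G) G).toLinearMap

def Om3 : M ⊗[ℂ] (G ⊗[ℂ] G) →ₗ[ℂ] G ⊗[ℂ] A :=
  LinearMap.mulRight ℂ T ∘ₗ map (qmap' Si) γ.toLinearMap ∘ₗ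
    (TensorProduct.comm ℂ M (G ⊗[ℂ] G)).toLinearMap

theorem imp13
    (hrho_coassoc : ∀ m : M,
      (TensorProduct.assoc ℂ M G G)
          (TensorProduct.map rho.toLinearMap LinearMap.id (rho m)) =
        TensorProduct.map LinearMap.id (Coalgebra.comul (R := ℂ)) (rho m))
    (hL2 : ∀ g : G, qmap' Si (comul (R := ℂ) g) = algebraMap ℂ G (counit g))
    (hrid : ∀ (R' : M →ₗ[ℂ] G ⊗[ℂ] A) (m : M),
      (TensorProduct.rid ℂ (G ⊗[ℂ] A)) (map R' (counit (R := ℂ)) (rho m)) = R' m)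
    (hi : ∀ m : M,
      T * TensorProduct.map LinearMap.id γ.toLinearMap (lam m) =
        (TensorProduct.comm ℂ A G)
            (TensorProduct.map γ.toLinearMap LinearMap.id (rho m)) * T)
    (m : M) :
    ((1 : G) ⊗ₜ[ℂ] γ m) * T =
      (chi3 Si γ T ∘ₗ B3) (TensorProduct.map lam.toLinearMap LinearMap.id (rho m)) := by
  have t1 : chi3 Si γ T ∘ₗ B3 = F3' Si γ T := by
    ext g m' h
    simp only [AlgebraTensorModule.curry_apply, curry_apply, coe_restrictScalars,
      LinearMap.comp_apply, B3, A3c, LinearEquiv.coe_coe, TensorProduct.assoc_tmul,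
      map_tmul, LinearMap.id_coe, id_eq, TensorProduct.comm_tmul,
      TensorProduct.assoc_symm_tmul, chi3_tmul, F3', LinearMap.mul'_apply,
      TensorProduct.mk_apply, LinearMap.flip_apply, LinearMap.mulLeft_apply]
    rw [mul_assoc]
  have t2 : F3' Si γ T ∘ₗ map lam.toLinearMap LinearMap.id = E3 Si rho γ T := by
    refine TensorProduct.ext' fun m' h => ?_
    simp only [LinearMap.comp_apply, map_tmul, LinearMap.id_coe, id_eq,
      AlgHom.toLinearMap_apply, F3', E3, LinearEquiv.coe_coe, TensorProduct.comm_tmul,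
      LinearMap.mul'_apply, TensorProduct.mk_apply, LinearMap.flip_apply,
      LinearMap.mulLeft_apply, Rz, LinearMap.mulRight_apply]
    rw [hi m']
  have t3 : E3 Si rho γ T = H3 Si γ T ∘ₗ map rho.toLinearMap LinearMap.id := by
    refine TensorProduct.ext' fun m' h => ?_
    simp [E3, H3, Rz]
  have t4 : H3 Si γ T ∘ₗ (TensorProduct.assoc ℂ M G G).symm.toLinearMap = Om3 Si γ T := by
    ext m' h1 h2
    simp only [AlgebraTensorModule.curry_apply, curry_apply, coe_restrictScalars,
      LinearMap.comp_apply, LinearEquiv.coe_coe, TensorProduct.assoc_symm_tmul, H3, Om3,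
      TensorProduct.comm_tmul, map_tmul, LinearMap.mul'_apply, TensorProduct.mk_apply,
      LinearMap.flip_apply, LinearMap.mulRight_apply, LinearMap.id_coe, id_eq,
      AlgHom.toLinearMap_apply, qmap']
    rw [← mul_assoc, Algebra.TensorProduct.tmul_mul_tmul, one_mul]
  have t5 : Om3 Si γ T ∘ₗ map LinearMap.id (comul (R := ℂ))
      = (TensorProduct.rid ℂ (G ⊗[ℂ] A)).toLinearMap
          ∘ₗ map (Rone' γ T) (counit (R := ℂ)) := by
    refine TensorProduct.ext' fun m' h => ?_
    simp only [LinearMap.comp_apply, map_tmul, LinearMap.id_coe, id_eq, Om3,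
      LinearEquiv.coe_coe, TensorProduct.comm_tmul, LinearMap.mulRight_apply,
      TensorProduct.rid_tmul, Rone', TensorProduct.mk_apply, AlgHom.toLinearMap_apply]
    rw [hL2 h, Algebra.algebraMap_eq_smul_one, ← smul_tmul', smul_mul_assoc]
  have hco : map rho.toLinearMap LinearMap.id (rho m)
      = (TensorProduct.assoc ℂ M G G).symm
          (map LinearMap.id (comul (R := ℂ)) (rho m)) := by
    rw [← hrho_coassoc m, LinearEquiv.symm_apply_apply]
  have d1 := LinearMap.congr_fun t2 (rho m)
  have d2 := LinearMap.congr_fun t3 (rho m)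
  have d3 := LinearMap.congr_fun t4 (map LinearMap.id (comul (R := ℂ)) (rho m))
  have d4 := LinearMap.congr_fun t5 (rho m)
  simp only [LinearMap.comp_apply, LinearEquiv.coe_coe] at d1 d2 d3 d4
  rw [t1]
  have : map lam.toLinearMap LinearMap.id (rho m)
      = (map lam.toLinearMap LinearMap.id ∘ₗ rho.toLinearMap) m := by simp
  rw [d1, d2, hco, d3, d4, hrid]
  simp [Rone']

def alp3 : M ⊗[ℂ] G →ₗ[ℂ] G ⊗[ℂ] A :=
  LinearMap.mul' ℂ (G ⊗[ℂ] A) ∘ₗ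
    map ((TensorProduct.mk ℂ G A).flip (1 : A)) (Rone' γ T) ∘ₗ
    (TensorProduct.comm ℂ M G).toLinearMap

def bet3 : M ⊗[ℂ] G →ₗ[ℂ] G ⊗[ℂ] A :=
  LinearMap.mul' ℂ (G ⊗[ℂ] A) ∘ₗ
    map ((TensorProduct.mk ℂ G A).flip (1 : A))
      ((chi3 Si γ T ∘ₗ B3) ∘ₗ map lam.toLinearMap LinearMap.id ∘ₗ rho.toLinearMap) ∘ₗ
    (TensorProduct.comm ℂ M G).toLinearMap

def Psi3 : (M ⊗[ℂ] G) ⊗[ℂ] G →ₗ[ℂ] G ⊗[ℂ] A :=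
  LinearMap.mul' ℂ (G ⊗[ℂ] A) ∘ₗ
    map ((TensorProduct.mk ℂ G A).flip (1 : A))
      (F3' Si γ T ∘ₗ map lam.toLinearMap LinearMap.id) ∘ₗ
    (TensorProduct.comm ℂ (M ⊗[ℂ] G) G).toLinearMap

def Om3' : M ⊗[ℂ] (G ⊗[ℂ] G) →ₗ[ℂ] G ⊗[ℂ] A :=
  LinearMap.mul' ℂ (G ⊗[ℂ] A) ∘ₗ
    map ((TensorProduct.mk ℂ G A).flip (1 : A) ∘ₗ qmap Si)
      (LinearMap.mulLeft ℂ T ∘ₗ map LinearMap.id γ.toLinearMap ∘ₗ lam.toLinearMap) ∘ₗ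
    (TensorProduct.comm ℂ M (G ⊗[ℂ] G)).toLinearMap

theorem imp31
    (hrho_coassoc : ∀ m : M,
      (TensorProduct.assoc ℂ M G G)
          (TensorProduct.map rho.toLinearMap LinearMap.id (rho m)) =
        TensorProduct.map LinearMap.id (Coalgebra.comul (R := ℂ)) (rho m))
    (hL1 : ∀ g : G, qmap Si (comul (R := ℂ) g) = algebraMap ℂ G (counit g))
    (hrid : ∀ (R' : M →ₗ[ℂ] G ⊗[ℂ] A) (m : M),
      (TensorProduct.rid ℂ (G ⊗[ℂ] A)) (map R' (counit (R := ℂ)) (rho m)) = R' m)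
    (hiii : ∀ m : M,
      ((1 : G) ⊗ₜ[ℂ] γ m) * T =
        (chi3 Si γ T ∘ₗ B3) (TensorProduct.map lam.toLinearMap LinearMap.id (rho m)))
    (m : M) :
    T * TensorProduct.map LinearMap.id γ.toLinearMap (lam m) =
      (TensorProduct.comm ℂ A G)
          (TensorProduct.map γ.toLinearMap LinearMap.id (rho m)) * T := by
  have t1 : chi3 Si γ T ∘ₗ B3 = F3' Si γ T := by
    ext g m' h
    simp only [AlgebraTensorModule.curry_apply, curry_apply, coe_restrictScalars,
      LinearMap.comp_apply, B3, A3c, LinearEquiv.coe_coe, TensorProduct.assoc_tmul,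
      map_tmul, LinearMap.id_coe, id_eq, TensorProduct.comm_tmul,
      TensorProduct.assoc_symm_tmul, chi3_tmul, F3', LinearMap.mul'_apply,
      TensorProduct.mk_apply, LinearMap.flip_apply, LinearMap.mulLeft_apply]
    rw [mul_assoc]
  have u1 : LinearMap.mulRight ℂ T ∘ₗ (TensorProduct.comm ℂ A G).toLinearMap
        ∘ₗ map γ.toLinearMap LinearMap.id = alp3 γ T := by
    refine TensorProduct.ext' fun m' h => ?_
    simp only [LinearMap.comp_apply, map_tmul, LinearMap.id_coe, id_eq,
      LinearEquiv.coe_coe, TensorProduct.comm_tmul, LinearMap.mulRight_apply, alp3,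
      Rone', TensorProduct.mk_apply, LinearMap.flip_apply, LinearMap.mul'_apply,
      AlgHom.toLinearMap_apply]
    rw [← mul_assoc, Algebra.TensorProduct.tmul_mul_tmul, one_mul, mul_one]
  have u2 : alp3 γ T = bet3 Si lam rho γ T := by
    refine TensorProduct.ext' fun m' h => ?_
    simp only [alp3, bet3, LinearMap.comp_apply, LinearEquiv.coe_coe,
      TensorProduct.comm_tmul, map_tmul, LinearMap.mul'_apply, Rone',
      TensorProduct.mk_apply, LinearMap.flip_apply, LinearMap.mulRight_apply,
      AlgHom.toLinearMap_apply]
    have hiii' := hiii m'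
    simp only [LinearMap.comp_apply] at hiii'
    rw [← hiii']
  have u3 : bet3 Si lam rho γ T = Psi3 Si lam γ T ∘ₗ map rho.toLinearMap LinearMap.id := by
    refine TensorProduct.ext' fun m' h => ?_
    simp only [bet3, Psi3, LinearMap.comp_apply, LinearEquiv.coe_coe,
      TensorProduct.comm_tmul, map_tmul, LinearMap.mul'_apply, LinearMap.id_coe, id_eq,
      AlgHom.toLinearMap_apply]
    have t1' := LinearMap.congr_fun t1 (map lam.toLinearMap LinearMap.id (rho m'))
    simp only [LinearMap.comp_apply] at t1'
    rw [t1']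
  have u4 : Psi3 Si lam γ T ∘ₗ (TensorProduct.assoc ℂ M G G).symm.toLinearMap
      = Om3' Si lam γ T := by
    ext m' h1 h2
    simp only [AlgebraTensorModule.curry_apply, curry_apply, coe_restrictScalars,
      LinearMap.comp_apply, LinearEquiv.coe_coe, TensorProduct.assoc_symm_tmul, Psi3,
      Om3', TensorProduct.comm_tmul, map_tmul, LinearMap.mul'_apply,
      TensorProduct.mk_apply, LinearMap.flip_apply, LinearMap.id_coe, id_eq,
      AlgHom.toLinearMap_apply, F3', LinearMap.mulLeft_apply, qmap]
    rw [← mul_assoc, Algebra.TensorProduct.tmul_mul_tmul, one_mul]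
  have u5 : Om3' Si lam γ T ∘ₗ map LinearMap.id (comul (R := ℂ))
      = (TensorProduct.rid ℂ (G ⊗[ℂ] A)).toLinearMap
          ∘ₗ map (LinearMap.mulLeft ℂ T ∘ₗ map LinearMap.id γ.toLinearMap ∘ₗ lam.toLinearMap)
              (counit (R := ℂ)) := by
    refine TensorProduct.ext' fun m' h => ?_
    simp only [LinearMap.comp_apply, map_tmul, LinearMap.id_coe, id_eq, Om3',
      LinearEquiv.coe_coe, TensorProduct.comm_tmul, LinearMap.mul'_apply,
      TensorProduct.mk_apply, LinearMap.flip_apply, LinearMap.mulLeft_apply,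
      TensorProduct.rid_tmul, AlgHom.toLinearMap_apply]
    rw [hL1 h, Algebra.algebraMap_eq_smul_one, ← smul_tmul', ← Algebra.TensorProduct.one_def,
      smul_mul_assoc, one_mul]
  have hco : map rho.toLinearMap LinearMap.id (rho m)
      = (TensorProduct.assoc ℂ M G G).symm
          (map LinearMap.id (comul (R := ℂ)) (rho m)) := by
    rw [← hrho_coassoc m, LinearEquiv.symm_apply_apply]
  have d1 := LinearMap.congr_fun u1 (rho m)
  have d2 := LinearMap.congr_fun u2 (rho m)
  have d3 := LinearMap.congr_fun u3 (rho m)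
  have d4 := LinearMap.congr_fun u4 (map LinearMap.id (comul (R := ℂ)) (rho m))
  have d5 := LinearMap.congr_fun u5 (rho m)
  simp only [LinearMap.comp_apply, LinearEquiv.coe_coe, LinearMap.mulRight_apply] at d1 d2 d3 d4 d5
  rw [d1, d2, d3, hco, d4, d5, hrid]
  simp
lemma RHSii_form (m : M) :
    TensorProduct.lift
        (LinearMap.mul ℂ (G ⊗[ℂ] A) ∘ₗ LinearMap.mulRight ℂ T)
        (TensorProduct.map
          ((TensorProduct.comm ℂ A G).toLinearMap ∘ₗ
            TensorProduct.map γ.toLinearMap LinearMap.id)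
          ((TensorProduct.mk ℂ G A).flip (1 : A) ∘ₗ Si)
          ((TensorProduct.comm ℂ G (M ⊗[ℂ] G))
            ((TensorProduct.assoc ℂ G M G)
              (TensorProduct.map lam.toLinearMap LinearMap.id (rho m)))))
      = chi Si γ T ((TensorProduct.assoc ℂ G M G)
          (TensorProduct.map lam.toLinearMap LinearMap.id (rho m))) := rfl

lemma RHSiii_form (m : M) :
    TensorProduct.lift
        (LinearMap.mul ℂ (G ⊗[ℂ] A) ∘ₗ LinearMap.mulRight ℂ T)
        (TensorProduct.map
          ((TensorProduct.mk ℂ G A).flip (1 : A) ∘ₗ Si)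
          (TensorProduct.map LinearMap.id γ.toLinearMap)
          ((TensorProduct.assoc ℂ G G M)
            (TensorProduct.map (TensorProduct.comm ℂ G G).toLinearMap LinearMap.id
              ((TensorProduct.assoc ℂ G G M).symm
                (TensorProduct.map LinearMap.id (TensorProduct.comm ℂ M G).toLinearMap
                  ((TensorProduct.assoc ℂ G M G)
                    (TensorProduct.map lam.toLinearMap LinearMap.id (rho m))))))))
      = (chi3 Si γ T ∘ₗ B3) (TensorProduct.map lam.toLinearMap LinearMap.id (rho m)) := rfl

def kap : G ⊗[ℂ] (G ⊗[ℂ] M) →ₗ[ℂ] G ⊗[ℂ] A :=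
  LinearMap.mul' ℂ (G ⊗[ℂ] A) ∘ₗ
    map (LinearMap.mulLeft ℂ T ∘ₗ map LinearMap.id γ.toLinearMap)
      ((TensorProduct.mk ℂ G A).flip (1 : A) ∘ₗ Si) ∘ₗ
    (TensorProduct.comm ℂ G (G ⊗[ℂ] M)).toLinearMap

lemma kap_tmul (g : G) (w : G ⊗[ℂ] M) :
    kap Si γ T (g ⊗ₜ w) = T * map LinearMap.id γ.toLinearMap w * (Si g ⊗ₜ (1 : A)) := by
  simp [kap]

theorem imp12
    (hlam_coassoc : ∀ m : M,
      TensorProduct.map LinearMap.id lam.toLinearMap (lam m) =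
        (TensorProduct.assoc ℂ G G M)
          (TensorProduct.map (Coalgebra.comul (R := ℂ)) LinearMap.id (lam m)))
    (hlam_counit : ∀ m : M,
      (TensorProduct.lid ℂ M)
        (TensorProduct.map (Coalgebra.counit (R := ℂ)) LinearMap.id (lam m)) = m)
    (hcomm : ∀ m : M,
      (TensorProduct.assoc ℂ G M G)
          (TensorProduct.map lam.toLinearMap LinearMap.id (rho m)) =
        TensorProduct.map LinearMap.id rho.toLinearMap (lam m))
    (hL1 : ∀ g : G, qmap Si (comul (R := ℂ) g) = algebraMap ℂ G (counit g))
    (hlid : ∀ (R' : M →ₗ[ℂ] G ⊗[ℂ] A) (m : M),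
      (TensorProduct.lid ℂ (G ⊗[ℂ] A)) (map (counit (R := ℂ)) R' (lam m)) = R' m)
    (hi : ∀ m : M,
      T * TensorProduct.map LinearMap.id γ.toLinearMap (lam m) =
        (TensorProduct.comm ℂ A G)
            (TensorProduct.map γ.toLinearMap LinearMap.id (rho m)) * T)
    (m : M) :
    T * ((1 : G) ⊗ₜ[ℂ] γ m) =
      chi Si γ T ((TensorProduct.assoc ℂ G M G)
        (TensorProduct.map lam.toLinearMap LinearMap.id (rho m))) := by
  rw [hcomm m]
  -- step a : chi ∘ (id ⊗ ρ) = kap ∘ (id ⊗ λ)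
  have step_a : chi Si γ T ∘ₗ map LinearMap.id rho.toLinearMap
      = kap Si γ T ∘ₗ map LinearMap.id lam.toLinearMap := by
    refine TensorProduct.ext' fun g m' => ?_
    simp only [LinearMap.comp_apply, map_tmul, LinearMap.id_coe, id_eq,
      AlgHom.toLinearMap_apply, chi_tmul, kap_tmul]
    rw [← hi m']
  -- step b : kap ∘ assoc ∘ (Δ ⊗ id) = lid ∘ (ε ⊗ Rone)
  have kap_assoc : kap Si γ T ∘ₗ (TensorProduct.assoc ℂ G G M).toLinearMap
      = LinearMap.mulLeft ℂ T ∘ₗ map (qmap Si) γ.toLinearMap := by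
    ext h g' m''
    simp [kap, qmap, Algebra.TensorProduct.tmul_mul_tmul, mul_assoc]
  have step_b : kap Si γ T ∘ₗ (TensorProduct.assoc ℂ G G M).toLinearMap
        ∘ₗ map (comul (R := ℂ)) LinearMap.id
      = (TensorProduct.lid ℂ (G ⊗[ℂ] A)).toLinearMap ∘ₗ map (counit (R := ℂ)) (Rone γ T) := by
    refine TensorProduct.ext' fun g m'' => ?_
    simp only [LinearMap.comp_apply, map_tmul, LinearMap.id_coe, id_eq, LinearEquiv.coe_coe]
    have h1 := LinearMap.congr_fun (kap_assoc) ((comul (R := ℂ) g) ⊗ₜ[ℂ] m'')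
    simp only [LinearMap.comp_apply, LinearEquiv.coe_coe, map_tmul, LinearMap.mulLeft_apply,
      AlgHom.toLinearMap_apply] at h1
    rw [h1, hL1 g]
    simp only [TensorProduct.lid_tmul, Rone, LinearMap.comp_apply,
      TensorProduct.mk_apply, LinearMap.mulLeft_apply, AlgHom.toLinearMap_apply]
    rw [Algebra.algebraMap_eq_smul_one, ← smul_tmul', mul_smul_comm]
  have e1 := LinearMap.congr_fun step_a (lam m)
  have e2 := LinearMap.congr_fun step_b (lam m)
  simp only [LinearMap.comp_apply, LinearEquiv.coe_coe] at e1 e2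
  rw [e1, hlam_coassoc m, e2, hlid]
  simp [Rone]

end Main
end St9
end
end St9Aux

/-- Let `G` be a finite-dimensional Hopf algebra (with inverse antipode
`Si = S⁻¹`), `(λ, ρ)` a commuting pair of coactions on `M` with two-sided coaction
`δ = (λ ⊗ id) ∘ ρ`, and `γ : M → A` an algebra map.  Then for `T ∈ G ⊗ A` the following are
equivalent: (i) `T` is a `λρ`-intertwiner, i.e. `T·λ_A(m) = ρ_A^op(m)·T` for all `m`;
(ii) `T·(1 ⊗ γ(m)) = (m₍₁₎ ⊗ γ(m₍₀₎))·T·(S⁻¹(m₍₋₁₎) ⊗ 1)` for all `m`;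
(iii) `(1 ⊗ γ(m))·T = (S⁻¹(m₍₁₎) ⊗ 1)·T·(m₍₋₁₎ ⊗ γ(m₍₀₎))` for all `m`. -/
theorem statement9
    (G M A : Type*) [Ring G] [HopfAlgebra ℂ G]
    [Ring M] [Algebra ℂ M] [Ring A] [Algebra ℂ A]
    (Si : G →ₗ[ℂ] G)
    (hSi1 : ∀ x : G, Si (HopfAlgebra.antipode (R := ℂ) x) = x)
    (hSi2 : ∀ x : G, HopfAlgebra.antipode (R := ℂ) (Si x) = x)
    -- left coaction `λ`
    (lam : M →ₐ[ℂ] G ⊗[ℂ] M)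
    (hlam_coassoc : ∀ m : M,
      TensorProduct.map LinearMap.id lam.toLinearMap (lam m) =
        (TensorProduct.assoc ℂ G G M)
          (TensorProduct.map (Coalgebra.comul (R := ℂ)) LinearMap.id (lam m)))
    (hlam_counit : ∀ m : M,
      (TensorProduct.lid ℂ M)
        (TensorProduct.map (Coalgebra.counit (R := ℂ)) LinearMap.id (lam m)) = m)
    -- right coaction `ρ`
    (rho : M →ₐ[ℂ] M ⊗[ℂ] G)
    (hrho_coassoc : ∀ m : M,
      (TensorProduct.assoc ℂ M G G)
          (TensorProduct.map rho.toLinearMap LinearMap.id (rho m)) =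
        TensorProduct.map LinearMap.id (Coalgebra.comul (R := ℂ)) (rho m))
    (hrho_counit : ∀ m : M,
      (TensorProduct.rid ℂ M)
        (TensorProduct.map LinearMap.id (Coalgebra.counit (R := ℂ)) (rho m)) = m)
    -- `λ` and `ρ` commute
    (hcomm : ∀ m : M,
      (TensorProduct.assoc ℂ G M G)
          (TensorProduct.map lam.toLinearMap LinearMap.id (rho m)) =
        TensorProduct.map LinearMap.id rho.toLinearMap (lam m))
    -- the algebra map `γ : M → A`
    (γ : M →ₐ[ℂ] A)
    (T : G ⊗[ℂ] A) :
    -- (i) ↔ (ii), and (i) ↔ (iii)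
    (((∀ m : M,
        T * TensorProduct.map LinearMap.id γ.toLinearMap (lam m) =
          (TensorProduct.comm ℂ A G)
              (TensorProduct.map γ.toLinearMap LinearMap.id (rho m)) * T) ↔
      (∀ m : M,
        T * ((1 : G) ⊗ₜ[ℂ] γ m) =
          TensorProduct.lift
            (LinearMap.mul ℂ (G ⊗[ℂ] A) ∘ₗ LinearMap.mulRight ℂ T)
            (TensorProduct.map
              ((TensorProduct.comm ℂ A G).toLinearMap ∘ₗ
                TensorProduct.map γ.toLinearMap LinearMap.id)
              ((TensorProduct.mk ℂ G A).flip (1 : A) ∘ₗ Si)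
              ((TensorProduct.comm ℂ G (M ⊗[ℂ] G))
                ((TensorProduct.assoc ℂ G M G)
                  (TensorProduct.map lam.toLinearMap LinearMap.id (rho m))))))) ∧
     ((∀ m : M,
        T * TensorProduct.map LinearMap.id γ.toLinearMap (lam m) =
          (TensorProduct.comm ℂ A G)
              (TensorProduct.map γ.toLinearMap LinearMap.id (rho m)) * T) ↔
      (∀ m : M,
        ((1 : G) ⊗ₜ[ℂ] γ m) * T =
          TensorProduct.lift
            (LinearMap.mul ℂ (G ⊗[ℂ] A) ∘ₗ LinearMap.mulRight ℂ T)
            (TensorProduct.map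
              ((TensorProduct.mk ℂ G A).flip (1 : A) ∘ₗ Si)
              (TensorProduct.map LinearMap.id γ.toLinearMap)
              ((TensorProduct.assoc ℂ G G M)
                (TensorProduct.map (TensorProduct.comm ℂ G G).toLinearMap LinearMap.id
                  ((TensorProduct.assoc ℂ G G M).symm
                    (TensorProduct.map LinearMap.id (TensorProduct.comm ℂ M G).toLinearMap
                      ((TensorProduct.assoc ℂ G M G)
                        (TensorProduct.map lam.toLinearMap LinearMap.id (rho m))))))))))) := by
  have hL1 : ∀ g : G, St9.qmap Si (Coalgebra.comul (R := ℂ) g)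
      = algebraMap ℂ G (Coalgebra.counit g) := fun g => St9.L1 Si hSi1 hSi2 g
  have hL2 : ∀ g : G, St9.qmap' Si (Coalgebra.comul (R := ℂ) g)
      = algebraMap ℂ G (Coalgebra.counit g) := fun g => St9.L2 Si hSi1 hSi2 g
  have hlid : ∀ (R' : M →ₗ[ℂ] G ⊗[ℂ] A) (m : M),
      (TensorProduct.lid ℂ (G ⊗[ℂ] A))
        (TensorProduct.map (Coalgebra.counit (R := ℂ)) R' (lam m)) = R' m :=
    fun R' m => St9.lid_collapse lam R' hlam_counit m
  have hrid : ∀ (R' : M →ₗ[ℂ] G ⊗[ℂ] A) (m : M),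
      (TensorProduct.rid ℂ (G ⊗[ℂ] A))
        (TensorProduct.map R' (Coalgebra.counit (R := ℂ)) (rho m)) = R' m :=
    fun R' m => St9.rid_collapse rho R' hrho_counit m
  refine ⟨⟨fun hi m => ?_, fun hii m => ?_⟩, ⟨fun hi m => ?_, fun hiii m => ?_⟩⟩
  · exact St9.imp12 Si lam rho γ T hlam_coassoc hlam_counit hcomm hL1 hlid hi m
  · exact St9.imp21 Si lam rho γ T hlam_coassoc hcomm hL2 hlid hii m
  · exact St9.imp13 Si lam rho γ T hrho_coassoc hL2 hrid hi m
  · exact St9.imp31 Si lam rho γ T hrho_coassoc hL1 hrid hiii m
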